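/- arXiv:1909.04839 — 6 statements merged into one kernel-verified Lean document; each statement's English description precedes it below -/
import Mathlib

section
/- Let E be a finite-dimensional real inner product space, let U ⊆ E be an open convex set, let ℓ : E → ℝ be twice continuously differentiable, and let C > 0, K ≥ 0, ε ≥ 0. Fix z₀ ∈ U and write H for the Hessian of ℓ at z₀ (as a continuous linear map E → E) and g₀ = ∇ℓ(z₀), and assume H is invertible. Assume: (1) for every z ∈ U and every v ∈ E, ⟨(∇²ℓ(z))v, v⟩ ≤ −2C‖v‖²; (2) for every z ∈ U, ‖(∇ℓ(z) − ∇ℓ(z₀)) − H(z − z₀)‖ ≤ K. Suppose z* ∈ U satisfies ℓ(z) ≤ ℓ(z*) for all z ∈ U, and z_ε ∈ U is an ε-maximizer, i.e. ℓ(z_ε) ≥ ℓ(z*) − ε. Then ‖z_ε − z₀‖ ≤ K/C + √(ε/C) + ‖H⁻¹ g₀‖. -/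
open scoped RealInnerProductSpace

/-- Theorem 1 of the paper (perturbation bound): on an open convex set `U` where the
twice continuously differentiable loss `f` is strongly concave with modulus `2C` and the
first-order Taylor expansion of the gradient around `z₀` has error at most `K`, every
`ε`-maximizer `zε` of `f` over `U` satisfies
`‖zε - z₀‖ ≤ K/C + √(ε/C) + ‖H⁻¹ ∇f(z₀)‖`, where `H` is the (invertible) Hessian at `z₀`. -/
theorem perturbation_bound
    {E : Type*} [NormedAddCommGroup E] [InnerProductSpace ℝ E] [FiniteDimensional ℝ E]
    (U : Set E) (hUopen : IsOpen U) (hUconv : Convex ℝ U)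
    (f : E → ℝ) (hf : ContDiff ℝ 2 f)
    (C K ε : ℝ) (hC : 0 < C) (hK : 0 ≤ K) (hε : 0 ≤ ε)
    (z₀ : E) (hz₀U : z₀ ∈ U)
    (Hess : E → E →L[ℝ] E)
    (hHess : ∀ z : E, HasFDerivAt (gradient f) (Hess z) z)
    (H : E ≃L[ℝ] E) (hH : (H : E →L[ℝ] E) = Hess z₀)
    (hcurv : ∀ z ∈ U, ∀ v : E, ⟪Hess z v, v⟫ ≤ -(2 * C) * ‖v‖ ^ 2)
    (htaylor : ∀ z ∈ U, ‖(gradient f z - gradient f z₀) - H (z - z₀)‖ ≤ K)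
    (zstar : E) (hzstarU : zstar ∈ U) (hmax : ∀ z ∈ U, f z ≤ f zstar)
    (zε : E) (hzεU : zε ∈ U) (hzε : f zstar - ε ≤ f zε) :
    ‖zε - z₀‖ ≤ K / C + Real.sqrt (ε / C) + ‖H.symm (gradient f z₀)‖ := by
  have hdf : Differentiable ℝ f := hf.differentiable (by norm_num)
  have hgrad : ∀ x : E, HasGradientAt f (gradient f x) x := fun x =>
    (hdf x).hasFDerivAt.hasGradientAt
  -- gradient vanishes at the maximizer
  have hlmax : IsLocalMax f zstar := by
    filter_upwards [hUopen.mem_nhds hzstarU] with z hz using hmax z hz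
  have hgs : gradient f zstar = 0 := by
    rw [gradient, hlmax.fderiv_eq_zero, map_zero]
  -- set-up of the segment from zstar to zε
  set v := zε - zstar with hv
  set γ : ℝ → E := fun t => zstar + t • v with hγ
  have hγ0 : γ 0 = zstar := by simp [hγ]
  have hγ1 : γ 1 = zε := by simp [hγ, hv]
  have hγmem : ∀ t ∈ Set.Icc (0 : ℝ) 1, γ t ∈ U := by
    intro t ht
    have h := hUconv hzstarU hzεU (by linarith [ht.2] : (0:ℝ) ≤ 1 - t) ht.1 (by ring)
    have : γ t = (1 - t) • zstar + t • zε := by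
      simp only [hγ, hv]
      module
    rw [this]; exact h
  have hγd : ∀ t : ℝ, HasDerivAt γ v t := by
    intro t
    have h := ((hasDerivAt_id t).smul_const v).const_add zstar
    rw [one_smul] at h; exact h
  -- derivative of f ∘ γ
  have hφ : ∀ t : ℝ, HasDerivAt (fun t => f (γ t)) ⟪gradient f (γ t), v⟫ t := by
    intro t
    have h := ((hgrad (γ t)).hasFDerivAt).comp_hasDerivAt t (hγd t)
    simpa [InnerProductSpace.toDual_apply_apply, Function.comp_def] using h
  -- derivative of t ↦ ⟪∇f (γ t), v⟫
  have hψ : ∀ t : ℝ, HasDerivAt (fun t => ⟪gradient f (γ t), v⟫) ⟪Hess (γ t) v, v⟫ t := by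
    intro t
    have hg : HasDerivAt (fun t => gradient f (γ t)) (Hess (γ t) v) t :=
      (hHess (γ t)).comp_hasDerivAt t (hγd t)
    have h := hg.inner (𝕜 := ℝ) (hasDerivAt_const t v)
    simpa [real_inner_comm] using h
  -- auxiliary function A with A' ≤ 0 on [0,1]
  set A : ℝ → ℝ := fun t => ⟪gradient f (γ t), v⟫ + 2 * C * ‖v‖ ^ 2 * t with hA
  have hAd : ∀ t : ℝ, HasDerivAt A (⟪Hess (γ t) v, v⟫ + 2 * C * ‖v‖ ^ 2) t := by
    intro t
    have h2 : HasDerivAt (fun t : ℝ => 2 * C * ‖v‖ ^ 2 * t) (2 * C * ‖v‖ ^ 2) t := by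
      simpa using (hasDerivAt_id t).const_mul (2 * C * ‖v‖ ^ 2)
    exact (hψ t).add h2
  have hAderiv : ∀ t : ℝ, deriv A t = ⟪Hess (γ t) v, v⟫ + 2 * C * ‖v‖ ^ 2 := fun t =>
    (hAd t).deriv
  have hAnonpos : ∀ t ∈ Set.Icc (0 : ℝ) 1, deriv A t ≤ 0 := by
    intro t ht
    rw [hAderiv]
    have := hcurv (γ t) (hγmem t ht) v
    linarith
  have hAanti : AntitoneOn A (Set.Icc (0 : ℝ) 1) := by
    apply antitoneOn_of_deriv_nonpos (convex_Icc 0 1)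
    · exact (Continuous.continuousOn (continuous_iff_continuousAt.2
        fun t => (hAd t).continuousAt))
    · exact fun t _ => (hAd t).differentiableAt.differentiableWithinAt
    · intro t ht
      exact hAnonpos t (interior_subset ht)
  have hA0 : A 0 = 0 := by simp [hA, hγ0, hgs, hlmax.fderiv_eq_zero]
  have hAle : ∀ t ∈ Set.Icc (0 : ℝ) 1, A t ≤ 0 := by
    intro t ht
    have := hAanti (Set.left_mem_Icc.2 zero_le_one) ht ht.1
    rw [hA0] at this; exact this
  -- auxiliary function B with B' = A
  set B : ℝ → ℝ := fun t => f (γ t) + C * ‖v‖ ^ 2 * t ^ 2 with hB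
  have hBd : ∀ t : ℝ, HasDerivAt B (A t) t := by
    intro t
    have h2 : HasDerivAt (fun t : ℝ => C * ‖v‖ ^ 2 * t ^ 2) (C * ‖v‖ ^ 2 * (2 * t)) t := by
      simpa using ((hasDerivAt_pow 2 t)).const_mul (C * ‖v‖ ^ 2)
    have := (hφ t).add h2
    have heq : ⟪gradient f (γ t), v⟫ + C * ‖v‖ ^ 2 * (2 * t) = A t := by
      simp only [hA]; ring
    rw [heq] at this; exact this
  have hBanti : AntitoneOn B (Set.Icc (0 : ℝ) 1) := by
    apply antitoneOn_of_deriv_nonpos (convex_Icc 0 1)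
    · exact (Continuous.continuousOn (continuous_iff_continuousAt.2
        fun t => (hBd t).continuousAt))
    · exact fun t _ => (hBd t).differentiableAt.differentiableWithinAt
    · intro t ht
      rw [(hBd t).deriv]
      exact hAle t (interior_subset ht)
  have hB10 : B 1 ≤ B 0 :=
    hBanti (Set.left_mem_Icc.2 zero_le_one) (Set.right_mem_Icc.2 zero_le_one) zero_le_one
  have hstrong : f zε + C * ‖v‖ ^ 2 ≤ f zstar := by
    have hB1 : B 1 = f zε + C * ‖v‖ ^ 2 := by simp [hB, hγ1]
    have hB0 : B 0 = f zstar := by simp [hB, hγ0]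
    rw [hB1, hB0] at hB10; exact hB10
  -- ‖v‖ ≤ √(ε/C)
  have hvsq : ‖v‖ ^ 2 ≤ ε / C := by
    rw [le_div_iff₀ hC]
    nlinarith
  have hvb : ‖v‖ ≤ Real.sqrt (ε / C) := by
    rw [show ‖v‖ = Real.sqrt (‖v‖ ^ 2) from (Real.sqrt_sq (norm_nonneg v)).symm]
    exact Real.sqrt_le_sqrt hvsq
  -- inverse Hessian bound : ‖H.symm u‖ ≤ ‖u‖ / (2C)
  have hHinv : ∀ u : E, ‖H.symm u‖ ≤ ‖u‖ / (2 * C) := by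
    intro u
    set x := H.symm u with hx
    have hHx : (H : E →L[ℝ] E) x = u := H.apply_symm_apply u
    have h1 : ⟪Hess z₀ x, x⟫ ≤ -(2 * C) * ‖x‖ ^ 2 := hcurv z₀ hz₀U x
    rw [← hH, hHx] at h1
    have h2 : ⟪-u, x⟫ ≤ ‖-u‖ * ‖x‖ := real_inner_le_norm (-u) x
    rw [inner_neg_left, norm_neg] at h2
    have h3 : 2 * C * ‖x‖ ^ 2 ≤ ‖u‖ * ‖x‖ := by nlinarith
    rcases eq_or_lt_of_le (norm_nonneg x) with h | h
    · rw [← h]; positivity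
    · rw [le_div_iff₀ (by positivity : (0:ℝ) < 2 * C)]
      nlinarith
  -- bound on ‖zstar - z₀‖
  set g₀ := gradient f z₀ with hg₀
  set w := zstar - z₀ with hw
  set r := (gradient f zstar - g₀) - H w with hr
  have hrK : ‖r‖ ≤ K := htaylor zstar hzstarU
  have hHw : (H : E →L[ℝ] E) w = -g₀ - r := by
    rw [hr, hgs]; abel
  have hweq : w = H.symm (-g₀ - r) := by
    rw [← hHw]
    exact (H.symm_apply_apply w).symm
  have hwnorm : ‖w‖ ≤ ‖H.symm g₀‖ + K / C := by
    have : H.symm (-g₀ - r) = -(H.symm g₀) - H.symm r := by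
      rw [map_sub, map_neg]
    rw [hweq, this]
    have h1 : ‖-(H.symm g₀) - H.symm r‖ ≤ ‖H.symm g₀‖ + ‖H.symm r‖ := by
      calc ‖-(H.symm g₀) - H.symm r‖ ≤ ‖-(H.symm g₀)‖ + ‖H.symm r‖ := norm_sub_le _ _
        _ = ‖H.symm g₀‖ + ‖H.symm r‖ := by rw [norm_neg]
    have h2 : ‖H.symm r‖ ≤ K / C := by
      calc ‖H.symm r‖ ≤ ‖r‖ / (2 * C) := hHinv r
        _ ≤ K / (2 * C) := by gcongr
        _ ≤ K / C := by gcongr; linarith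
    linarith
  -- combine
  have htri : ‖zε - z₀‖ ≤ ‖v‖ + ‖w‖ := by
    have : zε - z₀ = v + w := by rw [hv, hw]; abel
    rw [this]
    exact norm_add_le _ _
  linarith
end

section
/- Let E be a finite-dimensional real inner product space, ℓ : E → ℝ continuously differentiable with ‖∇ℓ(u)‖ ≤ M₁ for all u ∈ E and with L₁-Lipschitz gradient, and let λ > L₁. Define the surrogate loss ℓ_λ(x) = sup_{δ ∈ E} [ℓ(x + δ) − (λ/2)‖δ‖²]. Then for every x ∈ E, ℓ_λ(x) ≤ ℓ(x) + M₁²/(2(λ − L₁)). -/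
/-- The surrogate loss `ℓ_λ(x) = sup_δ [f(x + δ) - (λ/2)‖δ‖²]` exceeds the ordinary loss
`f(x)` by at most `M₁² / (2(λ - L₁))`, where `M₁` uniformly bounds `‖∇f‖` and `L₁` is the
Lipschitz constant of `∇f`. -/
theorem surrogate_loss_le_loss_add
    {E : Type*} [NormedAddCommGroup E] [InnerProductSpace ℝ E] [FiniteDimensional ℝ E]
    (f : E → ℝ) (hf : ContDiff ℝ 1 f)
    (M₁ : ℝ) (hM₁ : ∀ u : E, ‖gradient f u‖ ≤ M₁)
    (L₁ : ℝ) (hLip : ∀ u v : E, ‖gradient f u - gradient f v‖ ≤ L₁ * ‖u - v‖)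
    (lam : ℝ) (hlam : L₁ < lam) (x : E) :
    (⨆ δ : E, (f (x + δ) - lam / 2 * ‖δ‖ ^ 2)) ≤ f x + M₁ ^ 2 / (2 * (lam - L₁)) := by
  have hc : (0:ℝ) < lam - L₁ := by linarith
  have hM₁0 : 0 ≤ M₁ := le_trans (norm_nonneg _) (hM₁ 0)
  have hfd : ∀ u : E, ‖fderiv ℝ f u‖ ≤ M₁ := by
    intro u
    have h1 : ‖gradient f u‖ = ‖fderiv ℝ f u‖ := by
      rw [gradient]
      exact (InnerProductSpace.toDual ℝ E).symm.norm_map (fderiv ℝ f u)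
    rw [← h1]; exact hM₁ u
  have hRHS : 0 ≤ M₁ ^ 2 / (2 * (lam - L₁)) := by positivity
  apply ciSup_le
  intro δ
  have hmv : ‖f (x + δ) - f x‖ ≤ M₁ * ‖(x + δ) - x‖ := by
    apply Convex.norm_image_sub_le_of_norm_fderiv_le
      (fun u _ => (hf.differentiable one_ne_zero).differentiableAt)
      (fun u _ => hfd u) convex_univ (Set.mem_univ x) (Set.mem_univ (x + δ))
  have hmv' : f (x + δ) - f x ≤ M₁ * ‖δ‖ := by
    have : (x + δ) - x = δ := by abel
    rw [this] at hmv
    exact le_trans (le_abs_self _) hmv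
  rcases eq_or_ne δ 0 with rfl | hδ
  · simp only [add_zero, norm_zero]
    nlinarith [hRHS]
  · have hL₁ : 0 ≤ L₁ := by
      have h := hLip (x + δ) x
      have hnorm : (0:ℝ) < ‖(x + δ) - x‖ := by
        have : (x + δ) - x = δ := by abel
        rw [this]; exact norm_pos_iff.mpr hδ
      nlinarith [norm_nonneg (gradient f (x + δ) - gradient f x)]
    have ht : 0 ≤ ‖δ‖ := norm_nonneg _
    have key : M₁ * ‖δ‖ - lam / 2 * ‖δ‖ ^ 2 ≤ M₁ ^ 2 / (2 * (lam - L₁)) := by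
      rw [le_div_iff₀ (by linarith : (0:ℝ) < 2 * (lam - L₁))]
      nlinarith [sq_nonneg ((lam - L₁) * ‖δ‖ - M₁), mul_nonneg (mul_nonneg hL₁ hc.le) (sq_nonneg ‖δ‖)]
    linarith
end

section
/- Let E be a finite-dimensional real inner product space, ℓ : E → ℝ continuously differentiable with L₁-Lipschitz gradient, and let λ > L₁. For x ∈ E let δ*(x) ∈ E denote a global maximizer of δ ↦ ℓ(x + δ) − (λ/2)‖δ‖². Then for all x, x' ∈ E, ‖δ*(x) − δ*(x')‖ ≤ (L₁/(λ − L₁))·‖x − x'‖. -/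
open InnerProductSpace

local notation "⟪" x ", " y "⟫" => @inner ℝ _ _ x y

lemma surrogate_stationary
    {E : Type*} [NormedAddCommGroup E] [InnerProductSpace ℝ E] [FiniteDimensional ℝ E]
    (f : E → ℝ) (hf : ContDiff ℝ 1 f) (lam : ℝ)
    (x δ₀ : E)
    (hmax : ∀ δ : E, f (x + δ) - lam / 2 * ‖δ‖ ^ 2 ≤ f (x + δ₀) - lam / 2 * ‖δ₀‖ ^ 2) :
    gradient f (x + δ₀) = lam • δ₀ := by
  have hdf : Differentiable ℝ f := hf.differentiable one_ne_zero
  -- derivative of δ ↦ f (x + δ)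
  have h1 : HasFDerivAt (fun δ : E => f (x + δ)) (fderiv ℝ f (x + δ₀)) δ₀ :=
    (hdf (x + δ₀)).hasFDerivAt.comp δ₀ ((hasFDerivAt_id δ₀).const_add x)
  have h2 : HasFDerivAt (fun δ : E => lam / 2 * ‖δ‖ ^ 2)
      ((lam / 2) • (2 • (innerSL ℝ δ₀))) δ₀ :=
    ((hasStrictFDerivAt_norm_sq δ₀).hasFDerivAt).const_smul (lam / 2)
  have hg : HasFDerivAt (fun δ : E => f (x + δ) - lam / 2 * ‖δ‖ ^ 2)
      (fderiv ℝ f (x + δ₀) - (lam / 2) • (2 • (innerSL ℝ δ₀))) δ₀ := h1.sub h2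
  have hloc : IsLocalMax (fun δ : E => f (x + δ) - lam / 2 * ‖δ‖ ^ 2) δ₀ :=
    Filter.Eventually.of_forall (fun δ => hmax δ)
  have hzero : (fderiv ℝ f (x + δ₀) - (lam / 2) • (2 • (innerSL ℝ δ₀))) = 0 := by
    rw [← hg.fderiv]; exact hloc.fderiv_eq_zero
  have hfd : ∀ v : E, fderiv ℝ f (x + δ₀) v = lam * ⟪δ₀, v⟫ := by
    intro v
    have := congrFun (congrArg (fun (L : E →L[ℝ] ℝ) => (L : E → ℝ)) hzero) v
    simp only [ContinuousLinearMap.sub_apply, ContinuousLinearMap.smul_apply,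
      ContinuousLinearMap.zero_apply, ContinuousLinearMap.coe_smul', Pi.smul_apply,
      innerSL_apply_apply, smul_eq_mul] at this ⊢
    rw [nsmul_eq_mul] at this
    linarith
  refine ext_inner_left ℝ (fun v => ?_)
  have : ⟪gradient f (x + δ₀), v⟫ = fderiv ℝ f (x + δ₀) v := by
    rw [gradient]; exact toDual_symm_apply
  rw [real_inner_comm, this, hfd v, real_inner_smul_right, real_inner_comm]

/-- The optimal adversarial perturbation of the surrogate loss depends Lipschitz
continuously on the input: if `δs x` is a global maximizer of
`δ ↦ f(x + δ) - (λ/2)‖δ‖²` for every `x`, then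
`‖δs x - δs x'‖ ≤ (L₁/(λ - L₁)) ‖x - x'‖`. -/
theorem surrogate_maximizer_lipschitz
    {E : Type*} [NormedAddCommGroup E] [InnerProductSpace ℝ E] [FiniteDimensional ℝ E]
    (f : E → ℝ) (hf : ContDiff ℝ 1 f)
    (L₁ : ℝ) (hLip : ∀ u v : E, ‖gradient f u - gradient f v‖ ≤ L₁ * ‖u - v‖)
    (lam : ℝ) (hlam : L₁ < lam)
    (δs : E → E)
    (hδs : ∀ x : E, ∀ δ : E,
      f (x + δ) - lam / 2 * ‖δ‖ ^ 2 ≤ f (x + δs x) - lam / 2 * ‖δs x‖ ^ 2)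
    (x x' : E) :
    ‖δs x - δs x'‖ ≤ L₁ / (lam - L₁) * ‖x - x'‖ := by
  set δ₁ := δs x
  set δ₂ := δs x'
  set d := δ₁ - δ₂ with hd
  have s1 : gradient f (x + δ₁) = lam • δ₁ :=
    surrogate_stationary f hf lam x δ₁ (hδs x)
  have s2 : gradient f (x' + δ₂) = lam • δ₂ :=
    surrogate_stationary f hf lam x' δ₂ (hδs x')
  have key : lam * ‖d‖ ^ 2 = ⟪gradient f (x + δ₁) - gradient f (x' + δ₂), d⟫ := by
    rw [s1, s2, ← smul_sub, real_inner_smul_left, real_inner_self_eq_norm_sq]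
  have split : ⟪gradient f (x + δ₁) - gradient f (x' + δ₂), d⟫ =
      ⟪gradient f (x + δ₁) - gradient f (x' + δ₁), d⟫ +
      ⟪gradient f (x' + δ₁) - gradient f (x' + δ₂), d⟫ := by
    rw [← inner_add_left, sub_add_sub_cancel]
  have b1 : ⟪gradient f (x + δ₁) - gradient f (x' + δ₁), d⟫ ≤ L₁ * ‖x - x'‖ * ‖d‖ := by
    calc ⟪gradient f (x + δ₁) - gradient f (x' + δ₁), d⟫
        ≤ ‖gradient f (x + δ₁) - gradient f (x' + δ₁)‖ * ‖d‖ := real_inner_le_norm _ _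
      _ ≤ (L₁ * ‖x + δ₁ - (x' + δ₁)‖) * ‖d‖ := by
          exact mul_le_mul_of_nonneg_right (hLip _ _) (norm_nonneg _)
      _ = L₁ * ‖x - x'‖ * ‖d‖ := by rw [add_sub_add_right_eq_sub]
  have b2 : ⟪gradient f (x' + δ₁) - gradient f (x' + δ₂), d⟫ ≤ L₁ * ‖d‖ ^ 2 := by
    calc ⟪gradient f (x' + δ₁) - gradient f (x' + δ₂), d⟫
        ≤ ‖gradient f (x' + δ₁) - gradient f (x' + δ₂)‖ * ‖d‖ := real_inner_le_norm _ _
      _ ≤ (L₁ * ‖x' + δ₁ - (x' + δ₂)‖) * ‖d‖ := by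
          exact mul_le_mul_of_nonneg_right (hLip _ _) (norm_nonneg _)
      _ = L₁ * ‖d‖ ^ 2 := by rw [add_sub_add_left_eq_sub, ← hd]; ring
  have main : (lam - L₁) * ‖d‖ ^ 2 ≤ L₁ * ‖x - x'‖ * ‖d‖ := by
    nlinarith [key, split, b1, b2]
  have hL1nn : 0 ≤ L₁ * ‖x - x'‖ := le_trans (norm_nonneg _) (hLip x x')
  have hpos : 0 < lam - L₁ := by linarith
  rw [div_mul_eq_mul_div, le_div_iff₀ hpos]
  nlinarith [norm_nonneg d, main, hL1nn]
end

section
/- Let E be a finite-dimensional real inner product space, ℓ : E → ℝ continuously differentiable with L₁-Lipschitz gradient, and let λ > L₁. For x ∈ E let δ*(x) be the unique global maximizer of δ ↦ ℓ(x + δ) − (λ/2)‖δ‖², and define the surrogate loss ℓ_λ(x) = sup_{δ ∈ E} [ℓ(x + δ) − (λ/2)‖δ‖²]. Then ℓ_λ is differentiable on E with ∇ℓ_λ(x) = ∇ℓ(x + δ*(x)) for every x ∈ E. -/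
open scoped RealInnerProductSpace

section Aux

variable {E : Type*} [NormedAddCommGroup E] [InnerProductSpace ℝ E] [CompleteSpace E]

/-- In a complete real inner product space, `toDual` of a vector is `innerSL` of it. -/
lemma aux_toDual_eq_innerSL (w : E) :
    (InnerProductSpace.toDual ℝ E w : E →L[ℝ] ℝ) = innerSL ℝ w := by
  ext y
  simp [InnerProductSpace.toDual_apply_apply]

/-- `toDual` of the gradient is the Fréchet derivative. -/
lemma aux_toDual_gradient (f : E → ℝ) (z : E) :
    InnerProductSpace.toDual ℝ E (gradient f z) = fderiv ℝ f z := by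
  rw [gradient, (InnerProductSpace.toDual ℝ E).apply_symm_apply]

/-- Points of a segment are within `‖v - u‖` of the left endpoint. -/
lemma aux_seg_norm {u v z : E} (hz : z ∈ segment ℝ u v) : ‖z - u‖ ≤ ‖v - u‖ := by
  have h := (convex_closedBall u (dist v u)).segment_subset
    (Metric.mem_closedBall_self dist_nonneg) (Metric.mem_closedBall.2 le_rfl) hz
  rw [Metric.mem_closedBall] at h
  simpa [dist_eq_norm] using h

/-- Mean-value type estimate: if the gradient stays within `M` of a fixed vector `c` on the
segment from `u` to `v`, then `f v - f u` is within `M * ‖v - u‖` of `⟪c, v - u⟫`. -/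
lemma aux_mvt (f : E → ℝ) (hf : Differentiable ℝ f) (c : E) (M : ℝ) (u v : E)
    (hM : ∀ z ∈ segment ℝ u v, ‖gradient f z - c‖ ≤ M) :
    ‖f v - f u - ⟪c, v - u⟫‖ ≤ M * ‖v - u‖ := by
  set G : E → ℝ := fun z => f z - ⟪c, z⟫ with hG
  have hGd : ∀ z : E, HasFDerivAt G (fderiv ℝ f z - innerSL ℝ c) z := by
    intro z
    exact ((hf z).hasFDerivAt).sub ((innerSL ℝ c).hasFDerivAt)
  have hnorm : ∀ z : E, ‖fderiv ℝ f z - innerSL ℝ c‖ = ‖gradient f z - c‖ := by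
    intro z
    have : fderiv ℝ f z - innerSL ℝ c
        = InnerProductSpace.toDual ℝ E (gradient f z - c) := by
      rw [map_sub, aux_toDual_gradient, aux_toDual_eq_innerSL]
    rw [this, (InnerProductSpace.toDual ℝ E).norm_map]
  have key : ‖G v - G u‖ ≤ M * ‖v - u‖ := by
    apply (convex_segment u v).norm_image_sub_le_of_norm_fderiv_le
      (fun z _ => (hGd z).differentiableAt)
      (fun z hz => by rw [(hGd z).fderiv, hnorm]; exact hM z hz)
      (left_mem_segment ℝ u v) (right_mem_segment ℝ u v)
  have : G v - G u = f v - f u - ⟪c, v - u⟫ := by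
    simp only [hG, inner_sub_right]
    ring
  rwa [this] at key

end Aux

/-- Danskin-type lemma: the surrogate loss `ℓ_λ(x) = sup_δ [f(x + δ) - (λ/2)‖δ‖²]` is
differentiable, with gradient `∇ℓ_λ(x) = ∇f(x + δs x)` where `δs x` is the (unique)
global maximizer of the inner objective. -/
theorem surrogate_loss_gradient
    {E : Type*} [NormedAddCommGroup E] [InnerProductSpace ℝ E] [FiniteDimensional ℝ E]
    (f : E → ℝ) (hf : ContDiff ℝ 1 f)
    (L₁ : ℝ) (hLip : ∀ u v : E, ‖gradient f u - gradient f v‖ ≤ L₁ * ‖u - v‖)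
    (lam : ℝ) (hlam : L₁ < lam)
    (δs : E → E)
    (hδs : ∀ x : E, ∀ δ : E,
      f (x + δ) - lam / 2 * ‖δ‖ ^ 2 ≤ f (x + δs x) - lam / 2 * ‖δs x‖ ^ 2)
    (x : E) :
    HasGradientAt (fun x' : E => ⨆ δ : E, (f (x' + δ) - lam / 2 * ‖δ‖ ^ 2))
      (gradient f (x + δs x)) x := by
  have hfd : Differentiable ℝ f := hf.differentiable one_ne_zero
  -- The supremum is attained at `δs x'`.
  have hsup : (fun x' : E => ⨆ δ : E, (f (x' + δ) - lam / 2 * ‖δ‖ ^ 2))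
      = fun x' : E => f (x' + δs x') - lam / 2 * ‖δs x'‖ ^ 2 := by
    funext z
    refine le_antisymm (ciSup_le (hδs z)) ?_
    have hbdd : BddAbove (Set.range fun δ : E => f (z + δ) - lam / 2 * ‖δ‖ ^ 2) := by
      refine ⟨f (z + δs z) - lam / 2 * ‖δs z‖ ^ 2, ?_⟩
      rintro y ⟨δ, rfl⟩
      exact hδs z δ
    exact le_ciSup hbdd (δs z)
  rw [hsup]
  rcases subsingleton_or_nontrivial E with hE | hE
  · -- trivial space: everything is `0`
    have h0 : ∀ z : E, z = 0 := fun z => Subsingleton.elim z 0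
    have hfun : (fun x' : E => f (x' + δs x') - lam / 2 * ‖δs x'‖ ^ 2) = f := by
      funext z
      rw [h0 (δs z), add_zero, norm_zero]
      ring
    rw [hfun, show x + δs x = x by rw [h0 (δs x), add_zero]]
    exact (hfd x).hasGradientAt
  -- nontrivial case
  have hL₁ : 0 ≤ L₁ := by
    obtain ⟨v, hv⟩ := exists_ne (0 : E)
    have h1 : (0 : ℝ) ≤ L₁ * ‖v - 0‖ := le_trans (norm_nonneg _) (hLip v 0)
    have h2 : 0 < ‖v - 0‖ := by simpa [sub_zero] using norm_pos_iff.mpr hv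
    nlinarith
  set μ : ℝ := lam - L₁ with hμdef
  have hμ : 0 < μ := by simp [hμdef]; linarith
  -- First-order condition at the maximizer: ∇f (z + δs z) = lam • δs z
  have hfoc : ∀ z : E, gradient f (z + δs z) = lam • δs z := by
    intro z
    have hmax : IsLocalMax (fun δ : E => f (z + δ) - lam / 2 * ‖δ‖ ^ 2) (δs z) :=
      Filter.Eventually.of_forall (hδs z)
    have h1 : HasFDerivAt (fun δ : E => f (z + δ)) (fderiv ℝ f (z + δs z)) (δs z) := by
      have ht : HasFDerivAt (fun δ : E => z + δ) (ContinuousLinearMap.id ℝ E) (δs z) :=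
        (hasFDerivAt_id (δs z)).const_add z
      have := (hfd (z + δs z)).hasFDerivAt.comp (δs z) ht
      rw [ContinuousLinearMap.comp_id] at this
      exact this
    have h2 : HasFDerivAt (fun δ : E => lam / 2 * ‖δ‖ ^ 2)
        ((lam / 2) • (2 • innerSL ℝ (δs z))) (δs z) :=
      ((hasStrictFDerivAt_norm_sq (δs z)).hasFDerivAt).const_mul (lam / 2)
    have hzero := hmax.hasFDerivAt_eq_zero (h1.sub h2)
    have hD : fderiv ℝ f (z + δs z) = (lam / 2) • (2 • innerSL ℝ (δs z)) :=
      sub_eq_zero.mp hzero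
    have : fderiv ℝ f (z + δs z) = InnerProductSpace.toDual ℝ E (lam • δs z) := by
      rw [hD, map_smul, aux_toDual_eq_innerSL]
      ext y
      simp [two_smul]
      ring
    rw [gradient, this, (InnerProductSpace.toDual ℝ E).symm_apply_apply]
  -- Lipschitz continuity of the maximizer map
  have hδLip : ∀ y z : E, ‖δs y - δs z‖ ≤ (L₁ / μ) * ‖y - z‖ := by
    intro y z
    set d : ℝ := ‖δs y - δs z‖ with hd
    rcases eq_or_lt_of_le (norm_nonneg (δs y - δs z)) with h0 | h0
    · rw [hd, ← h0]
      positivity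
    have h1 : lam * d ^ 2 = ⟪gradient f (y + δs y) - gradient f (z + δs z), δs y - δs z⟫ := by
      rw [hfoc y, hfoc z, ← smul_sub, real_inner_smul_left, real_inner_self_eq_norm_sq]
    have h2 : ⟪gradient f (y + δs y) - gradient f (z + δs z), δs y - δs z⟫
        ≤ L₁ * (‖y - z‖ + d) * d := by
      calc ⟪gradient f (y + δs y) - gradient f (z + δs z), δs y - δs z⟫
          ≤ ‖gradient f (y + δs y) - gradient f (z + δs z)‖ * ‖δs y - δs z‖ :=
            real_inner_le_norm _ _
        _ ≤ (L₁ * ‖(y + δs y) - (z + δs z)‖) * d :=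
            mul_le_mul_of_nonneg_right (hLip _ _) (norm_nonneg _)
        _ ≤ (L₁ * (‖y - z‖ + d)) * d := by
            have : ‖(y + δs y) - (z + δs z)‖ ≤ ‖y - z‖ + d := by
              rw [add_sub_add_comm]
              exact norm_add_le _ _
            have := mul_le_mul_of_nonneg_left this hL₁
            nlinarith [h0.le]
        _ = L₁ * (‖y - z‖ + d) * d := by ring
    have h3 : μ * d ^ 2 ≤ L₁ * ‖y - z‖ * d := by nlinarith
    rw [← hd] at h0
    rw [div_mul_eq_mul_div, le_div_iff₀ hμ]
    nlinarith
  -- Main estimate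
  set c : E := gradient f (x + δs x) with hc
  set K : ℝ := L₁ * (1 + L₁ / μ) with hK
  have hK0 : 0 ≤ K := by positivity
  have key : ∀ y : E, |(f (y + δs y) - lam / 2 * ‖δs y‖ ^ 2)
      - (f (x + δs x) - lam / 2 * ‖δs x‖ ^ 2) - ⟪c, y - x⟫| ≤ K * ‖y - x‖ * ‖y - x‖ := by
    intro y
    -- lower bound via δ = δs x
    have hlow : -(L₁ * ‖y - x‖ * ‖y - x‖) ≤ (f (y + δs y) - lam / 2 * ‖δs y‖ ^ 2)
        - (f (x + δs x) - lam / 2 * ‖δs x‖ ^ 2) - ⟪c, y - x⟫ := by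
      have hmvt := aux_mvt f hfd c (L₁ * ‖y - x‖) (x + δs x) (y + δs x) (by
        intro z hz
        have h1 : ‖z - (x + δs x)‖ ≤ ‖(y + δs x) - (x + δs x)‖ := aux_seg_norm hz
        rw [add_sub_add_right_eq_sub] at h1
        calc ‖gradient f z - c‖ = ‖gradient f z - gradient f (x + δs x)‖ := by rw [hc]
          _ ≤ L₁ * ‖z - (x + δs x)‖ := hLip _ _
          _ ≤ L₁ * ‖y - x‖ := mul_le_mul_of_nonneg_left h1 hL₁)
      rw [add_sub_add_right_eq_sub] at hmvt
      have hge : f (y + δs x) - f (x + δs x) - ⟪c, y - x⟫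
          ≥ -(L₁ * ‖y - x‖ * ‖y - x‖) := by
        have := abs_le.mp (Real.norm_eq_abs _ ▸ hmvt)
        linarith [this.1]
      have hsel := hδs y (δs x)
      linarith
    -- upper bound via δ = δs y
    have hup : (f (y + δs y) - lam / 2 * ‖δs y‖ ^ 2)
        - (f (x + δs x) - lam / 2 * ‖δs x‖ ^ 2) - ⟪c, y - x⟫ ≤ K * ‖y - x‖ * ‖y - x‖ := by
      have hmvt := aux_mvt f hfd c (K * ‖y - x‖) (x + δs y) (y + δs y) (by
        intro z hz
        have h1 : ‖z - (x + δs y)‖ ≤ ‖(y + δs y) - (x + δs y)‖ := aux_seg_norm hz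
        rw [add_sub_add_right_eq_sub] at h1
        have h2 : ‖z - (x + δs x)‖ ≤ ‖y - x‖ + ‖δs y - δs x‖ := by
          calc ‖z - (x + δs x)‖ ≤ ‖z - (x + δs y)‖ + ‖(x + δs y) - (x + δs x)‖ :=
              norm_sub_le_norm_sub_add_norm_sub _ _ _
            _ ≤ ‖y - x‖ + ‖δs y - δs x‖ := by
                rw [add_sub_add_left_eq_sub]
                exact add_le_add h1 le_rfl
        have h3 : ‖δs y - δs x‖ ≤ (L₁ / μ) * ‖y - x‖ := hδLip y x
        calc ‖gradient f z - c‖ = ‖gradient f z - gradient f (x + δs x)‖ := by rw [hc]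
          _ ≤ L₁ * ‖z - (x + δs x)‖ := hLip _ _
          _ ≤ L₁ * (‖y - x‖ + (L₁ / μ) * ‖y - x‖) := by
              apply mul_le_mul_of_nonneg_left _ hL₁
              linarith
          _ = K * ‖y - x‖ := by rw [hK]; ring)
      rw [add_sub_add_right_eq_sub] at hmvt
      have hle : f (y + δs y) - f (x + δs y) - ⟪c, y - x⟫ ≤ K * ‖y - x‖ * ‖y - x‖ := by
        have := abs_le.mp (Real.norm_eq_abs _ ▸ hmvt)
        linarith [this.2]
      have hsel := hδs x (δs y)
      linarith
    rw [abs_le]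
    constructor
    · have hLK : L₁ * ‖y - x‖ * ‖y - x‖ ≤ K * ‖y - x‖ * ‖y - x‖ := by
        have : L₁ ≤ K := by
          rw [hK]
          nlinarith [div_nonneg hL₁ hμ.le]
        nlinarith [norm_nonneg (y - x), sq_nonneg (‖y - x‖)]
      linarith
    · exact hup
  -- conclude via the little-o characterization
  rw [hasGradientAt_iff_isLittleO, Asymptotics.isLittleO_iff]
  intro ε hε
  have hball : Metric.closedBall x (ε / (K + 1)) ∈ nhds x :=
    Metric.closedBall_mem_nhds x (by positivity)
  filter_upwards [hball] with y hy
  rw [Metric.mem_closedBall, dist_eq_norm] at hy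
  have h1 := key y
  have h2 : K * ‖y - x‖ * ‖y - x‖ ≤ ε * ‖y - x‖ := by
    have hK1 : 0 < K + 1 := by linarith
    have : K * ‖y - x‖ ≤ K * (ε / (K + 1)) := mul_le_mul_of_nonneg_left hy hK0
    have h3 : K * (ε / (K + 1)) ≤ ε := by
      rw [mul_div_assoc'] at *
      rw [div_le_iff₀ hK1]
      nlinarith
    nlinarith [norm_nonneg (y - x)]
  rw [Real.norm_eq_abs]
  calc |f (y + δs y) - lam / 2 * ‖δs y‖ ^ 2 - (f (x + δs x) - lam / 2 * ‖δs x‖ ^ 2)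
      - ⟪c, y - x⟫| ≤ K * ‖y - x‖ * ‖y - x‖ := h1
    _ ≤ ε * ‖y - x‖ := h2
end

section
/- Let (Z, 𝒜, μ) be a probability space, n ≥ 1, N ≥ 1, M ≥ 0, ε_r ≥ 0, and p ∈ (0,1). Let h : Z → ℝ be measurable with |h(z)| ≤ M for all z. Suppose Z is partitioned into N pairwise disjoint measurable sets C₁, …, C_N such that whenever z and z' lie in the same part Cᵢ, |h(z) − h(z')| ≤ ε_r. Let z₁, …, zₙ be independent samples each with law μ (i.e. the sample is drawn from the product measure μⁿ on Zⁿ). Then with μⁿ-probability at least 1 − p, | ∫ h dμ − (1/n)·∑_{i=1}^{n} h(zᵢ) | ≤ ε_r + M·√((2·N·ln 2 − 2·ln p)/n). -/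
open MeasureTheory

section Aux
open Real

/-- Core analytic inequality behind Hoeffding's lemma. -/
lemma hoeffding_core {α : ℝ} (hα : |α| ≤ 1) (u : ℝ) :
    Real.cosh u + α * Real.sinh u ≤ Real.exp (α * u + u ^ 2 / 2) := by
  set D : ℝ → ℝ := fun v => Real.cosh v + α * Real.sinh v with hDdef
  have hα2 : α ^ 2 ≤ 1 := by nlinarith [abs_nonneg α, sq_abs α]
  have hDpos : ∀ v, 0 < D v := by
    intro v
    show 0 < Real.cosh v + α * Real.sinh v
    have h1 : 1 ≤ (Real.cosh v + α * Real.sinh v) * (Real.cosh v - α * Real.sinh v) := by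
      nlinarith [Real.cosh_sq v, sq_nonneg (Real.sinh v)]
    nlinarith [Real.cosh_pos v]
  set S : ℝ → ℝ := fun v => Real.sinh v + α * Real.cosh v with hSdef
  have hD : ∀ v, HasDerivAt D (S v) v := fun v =>
    (Real.hasDerivAt_cosh v).add ((Real.hasDerivAt_sinh v).const_mul α)
  have hS : ∀ v, HasDerivAt S (D v) v := fun v =>
    (Real.hasDerivAt_sinh v).add ((Real.hasDerivAt_cosh v).const_mul α)
  set g : ℝ → ℝ := fun v => α + v - S v / D v with hgdef
  set G : ℝ → ℝ := fun v => α * v + v ^ 2 / 2 - Real.log (D v) with hGdef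
  have hg : ∀ v, HasDerivAt g (1 - (D v * D v - S v * S v) / D v ^ 2) v := by
    intro v
    have h1 : HasDerivAt (fun w : ℝ => α + w) 1 v := (hasDerivAt_id v).const_add α
    exact h1.sub (((hS v).div (hD v) (hDpos v).ne'))
  have hG : ∀ v, HasDerivAt G (g v) v := by
    intro v
    have h1 : HasDerivAt (fun w : ℝ => α * w + w ^ 2 / 2) (α + v) v := by
      have := ((hasDerivAt_pow 2 v).div_const 2).const_add (0 : ℝ)
      have h2 : HasDerivAt (fun w : ℝ => α * w) α v := by simpa using (hasDerivAt_id v).const_mul α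
      have h3 : HasDerivAt (fun w : ℝ => w ^ 2 / 2) ((2 : ℕ) * v ^ 1 / 2) v :=
        (hasDerivAt_pow 2 v).div_const 2
      have h4 := h2.add h3
      refine h4.congr_deriv ?_
      push_cast; ring
    have h5 : HasDerivAt (fun w => Real.log (D w)) (S v / D v) v := (hD v).log (hDpos v).ne'
    exact h1.sub h5
  have hgmono : Monotone g := by
    apply monotone_of_deriv_nonneg (fun v => (hg v).differentiableAt)
    intro v
    rw [(hg v).deriv]
    have hD2 : (0:ℝ) < D v ^ 2 := pow_pos (hDpos v) 2
    rw [sub_nonneg, div_le_one hD2]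
    nlinarith [sq_nonneg (S v)]
  have hg0 : g 0 = 0 := by
    simp [hgdef, hSdef, hDdef, Real.sinh_zero, Real.cosh_zero]
  have hGnonneg : ∀ v, 0 ≤ G v := by
    have hG0 : G 0 = 0 := by simp [hGdef, hDdef, Real.sinh_zero, Real.cosh_zero]
    intro v
    rcases le_total 0 v with hv | hv
    · have hmono : MonotoneOn G (Set.Ici 0) := by
        apply monotoneOn_of_deriv_nonneg (convex_Ici 0)
          (fun w _ => (hG w).continuousAt.continuousWithinAt)
          (fun w _ => (hG w).differentiableAt.differentiableWithinAt)
        intro w hw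
        rw [(hG w).deriv]
        rw [interior_Ici] at hw
        calc (0:ℝ) = g 0 := hg0.symm
          _ ≤ g w := hgmono (le_of_lt hw)
      calc (0:ℝ) = G 0 := hG0.symm
        _ ≤ G v := hmono (by simp) (by simpa using hv) hv
    · have hanti : AntitoneOn G (Set.Iic 0) := by
        apply antitoneOn_of_deriv_nonpos (convex_Iic 0)
          (fun w _ => (hG w).continuousAt.continuousWithinAt)
          (fun w _ => (hG w).differentiableAt.differentiableWithinAt)
        intro w hw
        rw [(hG w).deriv]
        rw [interior_Iic] at hw
        calc g w ≤ g 0 := hgmono (le_of_lt hw)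
          _ = 0 := hg0
      calc (0:ℝ) = G 0 := hG0.symm
        _ ≤ G v := hanti (by simpa using hv) (by simp) hv
  have := hGnonneg u
  have hlog : Real.log (D u) ≤ α * u + u ^ 2 / 2 := by
    simp only [hGdef] at this; linarith
  exact (Real.log_le_iff_le_exp (hDpos u)).mp hlog

lemma hoeffding_mgf {Z : Type*} [MeasurableSpace Z] (μ : Measure Z) [IsProbabilityMeasure μ]
    {M : ℝ} (hM : 0 < M) {h : Z → ℝ} (hmeas : Measurable h) (hb : ∀ z, |h z| ≤ M)
    {m : ℝ} (hm : (∫ z, h z ∂μ) = m) (lam : ℝ) :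
    ∫ z, Real.exp (lam * (h z - m)) ∂μ ≤ Real.exp (lam ^ 2 * M ^ 2 / 2) := by
  have hInth : Integrable h μ :=
    (integrable_const M).mono' hmeas.aestronglyMeasurable
      (ae_of_all _ (fun z => by simpa using hb z))
  have hmM : |m| ≤ M := by
    rw [← hm]
    calc |∫ z, h z ∂μ| ≤ ∫ z, |h z| ∂μ := by
          simpa using norm_integral_le_integral_norm (μ := μ) h
      _ ≤ ∫ _, M ∂μ := integral_mono hInth.abs (integrable_const M) (fun z => hb z)
      _ = M := by simp
  set u : ℝ := lam * M with hu
  -- pointwise convexity bound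
  have hpt : ∀ z, Real.exp (lam * h z) ≤ Real.cosh u + (h z / M) * Real.sinh u := by
    intro z
    have habs := abs_le.mp (hb z)
    have ha : (0:ℝ) ≤ (M - h z) / (2 * M) := by
      apply div_nonneg <;> linarith
    have hbnn : (0:ℝ) ≤ (M + h z) / (2 * M) := by
      apply div_nonneg <;> linarith
    have hab : (M - h z) / (2 * M) + (M + h z) / (2 * M) = 1 := by
      field_simp; ring
    have hcvx := convexOn_exp.2 (Set.mem_univ (-(lam * M))) (Set.mem_univ (lam * M))
      ha hbnn hab
    simp only [smul_eq_mul] at hcvx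
    have harg : (M - h z) / (2 * M) * -(lam * M) + (M + h z) / (2 * M) * (lam * M)
        = lam * h z := by field_simp; ring
    rw [harg] at hcvx
    calc Real.exp (lam * h z)
        ≤ (M - h z) / (2 * M) * Real.exp (-(lam * M)) +
          (M + h z) / (2 * M) * Real.exp (lam * M) := hcvx
      _ = Real.cosh u + (h z / M) * Real.sinh u := by
          rw [Real.cosh_eq, Real.sinh_eq, hu]
          field_simp
          ring
  -- integrate
  have hIntexp : Integrable (fun z => Real.exp (lam * h z)) μ := by
    refine (integrable_const (Real.exp (|lam| * M))).mono'
      ((Real.measurable_exp.comp (hmeas.const_mul lam)).aestronglyMeasurable)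
      (ae_of_all _ (fun z => ?_))
    rw [Real.norm_eq_abs, Real.abs_exp]
    apply Real.exp_le_exp.mpr
    calc lam * h z ≤ |lam * h z| := le_abs_self _
      _ = |lam| * |h z| := abs_mul _ _
      _ ≤ |lam| * M := by
          exact mul_le_mul_of_nonneg_left (hb z) (abs_nonneg lam)
  have hIntrhs : Integrable (fun z => Real.cosh u + (h z / M) * Real.sinh u) μ :=
    ((integrable_const (Real.cosh u)).add ((hInth.div_const M).mul_const (Real.sinh u)))
  have hint1 : ∫ z, Real.exp (lam * h z) ∂μ ≤ Real.cosh u + (m / M) * Real.sinh u := by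
    calc ∫ z, Real.exp (lam * h z) ∂μ
        ≤ ∫ z, (Real.cosh u + (h z / M) * Real.sinh u) ∂μ :=
          integral_mono hIntexp hIntrhs hpt
      _ = Real.cosh u + (m / M) * Real.sinh u := by
          rw [integral_add (integrable_const _) ((hInth.div_const M).mul_const _)]
          rw [integral_mul_const, integral_div, hm]
          simp
  have hαabs : |m / M| ≤ 1 := by
    rw [abs_div, abs_of_pos hM, div_le_one hM]
    exact hmM
  have hcore := hoeffding_core hαabs u
  have hfinal : ∫ z, Real.exp (lam * h z) ∂μ ≤ Real.exp (m / M * u + u ^ 2 / 2) :=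
    hint1.trans hcore
  have hrw : (fun z => Real.exp (lam * (h z - m))) =
      fun z => Real.exp (lam * h z) / Real.exp (lam * m) := by
    funext z; rw [← Real.exp_sub]; ring_nf
  rw [hrw, integral_div]
  rw [div_le_iff₀ (Real.exp_pos _), ← Real.exp_add]
  have : m / M * u + u ^ 2 / 2 = lam ^ 2 * M ^ 2 / 2 + lam * m := by
    rw [hu]; field_simp; ring
  rw [this] at hfinal
  exact hfinal

lemma hoeffding_tail {Z : Type*} [MeasurableSpace Z] (μ : Measure Z) [IsProbabilityMeasure μ]
    (n : ℕ) {M : ℝ} (hM : 0 < M) {h : Z → ℝ} (hmeas : Measurable h) (hb : ∀ z, |h z| ≤ M)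
    {m : ℝ} (hm : (∫ z, h z ∂μ) = m) {t : ℝ} (ht : 0 ≤ t) :
    (Measure.pi fun _ : Fin n => μ) {ω | (n : ℝ) * t ≤ ∑ i : Fin n, (h (ω i) - m)} ≤
      ENNReal.ofReal (Real.exp (-((n : ℝ) * t ^ 2 / (2 * M ^ 2)))) := by
  set ν := Measure.pi fun _ : Fin n => μ with hν
  haveI : IsProbabilityMeasure ν := by
    rw [hν]; infer_instance
  set X : (Fin n → Z) → ℝ := fun ω => ∑ i : Fin n, (h (ω i) - m) with hX
  have hXmeas : Measurable X :=
    Finset.measurable_sum _ (fun i _ => (hmeas.comp (measurable_pi_apply i)).sub measurable_const)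
  set lam : ℝ := t / M ^ 2 with hlam
  have hlam0 : 0 ≤ lam := div_nonneg ht (by positivity)
  have hmM : |m| ≤ M := by
    rw [← hm]
    have hInth : Integrable h μ :=
      (integrable_const M).mono' hmeas.aestronglyMeasurable
        (ae_of_all _ (fun z => by simpa using hb z))
    calc |∫ z, h z ∂μ| ≤ ∫ z, |h z| ∂μ := by
          simpa using norm_integral_le_integral_norm (μ := μ) h
      _ ≤ ∫ _, M ∂μ := integral_mono hInth.abs (integrable_const M) (fun z => hb z)
      _ = M := by simp
  -- integrability of exp (lam * X)
  have hIntX : Integrable (fun ω => Real.exp (lam * X ω)) ν := by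
    refine (integrable_const (Real.exp (|lam| * ((n : ℝ) * (2 * M))))).mono'
      ((Real.measurable_exp.comp (hXmeas.const_mul lam)).aestronglyMeasurable)
      (ae_of_all _ (fun ω => ?_))
    rw [Real.norm_eq_abs, Real.abs_exp]
    apply Real.exp_le_exp.mpr
    have hXb : |X ω| ≤ (n : ℝ) * (2 * M) := by
      rw [hX]
      calc |∑ i : Fin n, (h (ω i) - m)| ≤ ∑ i : Fin n, |h (ω i) - m| :=
            Finset.abs_sum_le_sum_abs _ _
        _ ≤ ∑ _i : Fin n, (2 * M) := by
            apply Finset.sum_le_sum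
            intro i _
            calc |h (ω i) - m| ≤ |h (ω i)| + |m| := abs_sub _ _
              _ ≤ 2 * M := by linarith [hb (ω i)]
        _ = (n : ℝ) * (2 * M) := by simp [Finset.sum_const, mul_comm]
    calc lam * X ω ≤ |lam * X ω| := le_abs_self _
      _ = |lam| * |X ω| := abs_mul _ _
      _ ≤ |lam| * ((n : ℝ) * (2 * M)) := mul_le_mul_of_nonneg_left hXb (abs_nonneg lam)
  -- Chernoff
  have hcher := ProbabilityTheory.measure_ge_le_exp_mul_mgf (μ := ν) (X := X)
    ((n : ℝ) * t) hlam0 hIntX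
  -- compute mgf as a power via Fubini
  have hmgf : ProbabilityTheory.mgf X ν lam = (∫ z, Real.exp (lam * (h z - m)) ∂μ) ^ n := by
    rw [ProbabilityTheory.mgf]
    letI : MeasureSpace Z := ⟨μ⟩
    have hvol : ν = (volume : Measure (Fin n → Z)) := by
      rw [hν, MeasureTheory.volume_pi]; rfl
    haveI : SigmaFinite (volume : Measure Z) := by
      show SigmaFinite μ; infer_instance
    rw [hν]
    have : (fun ω : Fin n → Z => Real.exp (lam * X ω)) =
        fun ω => ∏ i : Fin n, Real.exp (lam * (h (ω i) - m)) := by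
      funext ω
      rw [hX, Finset.mul_sum, Real.exp_sum]
    rw [this]
    rw [MeasureTheory.integral_fintype_prod_eq_pow
      (fun z => Real.exp (lam * (h z - m)))]
    simp only [Fintype.card_fin]
  have hmgf_le : ProbabilityTheory.mgf X ν lam ≤ Real.exp (lam ^ 2 * M ^ 2 / 2) ^ n := by
    rw [hmgf]
    apply pow_le_pow_left₀ (integral_nonneg (fun z => (Real.exp_pos _).le))
    exact hoeffding_mgf μ hM hmeas hb hm lam
  have hfin : (ν {ω | (n : ℝ) * t ≤ X ω}).toReal ≤
      Real.exp (-((n : ℝ) * t ^ 2 / (2 * M ^ 2))) := by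
    calc (ν {ω | (n : ℝ) * t ≤ X ω}).toReal
        ≤ Real.exp (-lam * ((n : ℝ) * t)) * ProbabilityTheory.mgf X ν lam := hcher
      _ ≤ Real.exp (-lam * ((n : ℝ) * t)) * Real.exp (lam ^ 2 * M ^ 2 / 2) ^ n :=
          mul_le_mul_of_nonneg_left hmgf_le (Real.exp_pos _).le
      _ = Real.exp (-((n : ℝ) * t ^ 2 / (2 * M ^ 2))) := by
          rw [← Real.exp_nat_mul, ← Real.exp_add]
          congr 1
          rw [hlam]
          field_simp
          ring
  rw [← ENNReal.le_ofReal_iff_toReal_le (measure_ne_top ν _) (Real.exp_pos _).le] at hfin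
  exact hfin



lemma fin_sum_sub_const {n : ℕ} (f : Fin n → ℝ) (c : ℝ) :
    ∑ i : Fin n, (f i - c) = (∑ i : Fin n, f i) - (n : ℝ) * c := by
  rw [Finset.sum_sub_distrib]
  simp [Finset.sum_const, Finset.card_univ, nsmul_eq_mul]

end Aux

/-- Robustness-based generalization lemma (Xu–Mannor style): if the sample space is
partitioned into `N` measurable cells on each of which the bounded measurable function
`h` varies by at most `εr`, then with probability at least `1 - p` over `n` i.i.d.
samples, the gap between the expectation of `h` and its empirical average is at most
`εr + M √((2 N ln 2 - 2 ln p) / n)`. -/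
theorem robustness_generalization_bound
    {Z : Type*} [MeasurableSpace Z] (μ : Measure Z) [IsProbabilityMeasure μ]
    (n N : ℕ) (hn : 1 ≤ n) (hN : 1 ≤ N)
    (M εr : ℝ) (hM : 0 ≤ M) (hεr : 0 ≤ εr) (p : ℝ) (hp : p ∈ Set.Ioo (0 : ℝ) 1)
    (h : Z → ℝ) (hmeas : Measurable h) (hbound : ∀ z : Z, |h z| ≤ M)
    (C : Fin N → Set Z) (hCmeas : ∀ i, MeasurableSet (C i))
    (hCdisj : Pairwise (Function.onFun Disjoint C))
    (hCcover : (⋃ i, C i) = Set.univ)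
    (hCdiam : ∀ i : Fin N, ∀ z ∈ C i, ∀ z' ∈ C i, |h z - h z'| ≤ εr) :
    ENNReal.ofReal (1 - p) ≤
      (Measure.pi fun _ : Fin n => μ)
        {ω : Fin n → Z |
          |(∫ z, h z ∂μ) - (1 / (n : ℝ)) * ∑ i : Fin n, h (ω i)| ≤
            εr + M * Real.sqrt ((2 * N * Real.log 2 - 2 * Real.log p) / n)} := by
  obtain ⟨hp0, hp1⟩ := hp
  set ν := Measure.pi fun _ : Fin n => μ with hν
  haveI : IsProbabilityMeasure ν := by rw [hν]; infer_instance
  rcases eq_or_lt_of_le hM with hM0 | hMpos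
  · -- degenerate case M = 0 : h is identically zero
    have hMeq : M = 0 := hM0.symm
    have hz : ∀ z, h z = 0 := fun z =>
      abs_eq_zero.mp (le_antisymm (hMeq ▸ hbound z) (abs_nonneg _))
    have hU : {ω : Fin n → Z |
        |(∫ z, h z ∂μ) - (1 / (n : ℝ)) * ∑ i : Fin n, h (ω i)| ≤
          εr + M * Real.sqrt ((2 * N * Real.log 2 - 2 * Real.log p) / n)} = Set.univ := by
      ext ω
      simp only [Set.mem_setOf_eq, Set.mem_univ, iff_true, hz]
      simp [hMeq, hεr]
    rw [hU, measure_univ]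
    exact ENNReal.ofReal_le_one.mpr (by linarith)
  · -- main case 0 < M
    set m := ∫ z, h z ∂μ with hm
    have hnpos : (0 : ℝ) < n := by exact_mod_cast hn
    have hne : (n : ℝ) ≠ 0 := hnpos.ne'
    have hlogp : Real.log p < 0 := Real.log_neg hp0 hp1
    have hlog2 : (0 : ℝ) < Real.log 2 := Real.log_pos one_lt_two
    have hNpos : (0 : ℝ) < N := by exact_mod_cast hN
    have harg : 0 ≤ (2 * N * Real.log 2 - 2 * Real.log p) / n := by
      apply div_nonneg _ hnpos.le
      nlinarith
    set τ := Real.sqrt ((2 * N * Real.log 2 - 2 * Real.log p) / n) with hτ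
    have hτ0 : 0 ≤ τ := Real.sqrt_nonneg _
    set t := M * τ with ht
    have ht0 : 0 ≤ t := mul_nonneg hMpos.le hτ0
    have hexp : (n : ℝ) * t ^ 2 / (2 * M ^ 2) = N * Real.log 2 - Real.log p := by
      have hτsq : τ ^ 2 = (2 * N * Real.log 2 - 2 * Real.log p) / n :=
        Real.sq_sqrt harg
      rw [ht, mul_pow, hτsq]
      field_simp
    set B := {ω : Fin n → Z | (n : ℝ) * t ≤ ∑ i : Fin n, (h (ω i) - m)} with hB
    set A := {ω : Fin n → Z | (n : ℝ) * t ≤ ∑ i : Fin n, (-h (ω i) - -m)} with hA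
    have htailB : ν B ≤ ENNReal.ofReal (Real.exp (-((n : ℝ) * t ^ 2 / (2 * M ^ 2)))) :=
      hoeffding_tail μ n hMpos hmeas hbound hm.symm ht0
    have htailA : ν A ≤ ENNReal.ofReal (Real.exp (-((n : ℝ) * t ^ 2 / (2 * M ^ 2)))) := by
      refine hoeffding_tail μ n hMpos hmeas.neg (fun z => by simpa using hbound z) ?_ ht0
      rw [show (-h) = fun z => -h z from rfl, integral_neg, hm]
    have hnum : ENNReal.ofReal (Real.exp (-((n : ℝ) * t ^ 2 / (2 * M ^ 2)))) ≤
        ENNReal.ofReal (p / 2) := by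
      apply ENNReal.ofReal_le_ofReal
      rw [hexp]
      have hrw : -((N : ℝ) * Real.log 2 - Real.log p)
          = Real.log p - (N : ℝ) * Real.log 2 := by ring
      rw [hrw, Real.exp_sub, Real.exp_log hp0, Real.exp_nat_mul, Real.exp_log two_pos]
      have h2N : (2 : ℝ) ≤ 2 ^ N := by
        calc (2 : ℝ) = 2 ^ 1 := (pow_one 2).symm
          _ ≤ 2 ^ N := pow_le_pow_right₀ one_le_two hN
      exact div_le_div_of_nonneg_left hp0.le two_pos h2N
    set S := {ω : Fin n → Z |
        |m - (1 / (n : ℝ)) * ∑ i : Fin n, h (ω i)| ≤ εr + M * τ} with hS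
    have hsum_meas : Measurable fun ω : Fin n → Z => ∑ i : Fin n, h (ω i) :=
      Finset.measurable_sum _ (fun i _ => hmeas.comp (measurable_pi_apply i))
    have hSmeas : MeasurableSet S :=
      measurableSet_le ((measurable_const.sub (hsum_meas.const_mul (1 / (n : ℝ)))).abs)
        measurable_const
    have hsub : Sᶜ ⊆ A ∪ B := by
      intro ω hω
      simp only [hS, Set.mem_compl_iff, Set.mem_setOf_eq, not_le] at hω
      set Sm := ∑ i : Fin n, h (ω i) with hSm
      have ht' : t < |m - (1 / (n : ℝ)) * Sm| := by
        calc t ≤ εr + M * τ := by rw [ht]; linarith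
          _ < _ := hω
      have hcancel : (n : ℝ) * ((1 / (n : ℝ)) * Sm) = Sm := by field_simp
      rcases lt_abs.mp ht' with h1 | h1
      · left
        simp only [hA, Set.mem_setOf_eq]
        have hsum : ∑ i : Fin n, (-h (ω i) - -m) = (n : ℝ) * m - Sm := by
          rw [fin_sum_sub_const (fun i => -h (ω i)) (-m), Finset.sum_neg_distrib, ← hSm]
          ring
        rw [hsum]
        have h4 := mul_lt_mul_of_pos_left h1 hnpos
        rw [mul_sub, hcancel] at h4
        linarith
      · right
        simp only [hB, Set.mem_setOf_eq]
        have hsum : ∑ i : Fin n, (h (ω i) - m) = Sm - (n : ℝ) * m := by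
          rw [fin_sum_sub_const (fun i => h (ω i)) m, ← hSm]
        rw [hsum]
        have h1' : t < (1 / (n : ℝ)) * Sm - m := by linarith
        have h4 := mul_lt_mul_of_pos_left h1' hnpos
        rw [mul_sub, hcancel] at h4
        linarith
    have hSc : ν Sᶜ ≤ ENNReal.ofReal p := by
      calc ν Sᶜ ≤ ν (A ∪ B) := measure_mono hsub
        _ ≤ ν A + ν B := measure_union_le A B
        _ ≤ ENNReal.ofReal (p / 2) + ENNReal.ofReal (p / 2) := add_le_add
            (htailA.trans hnum) (htailB.trans hnum)
        _ = ENNReal.ofReal p := by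
            rw [← ENNReal.ofReal_add (by linarith) (by linarith)]
            norm_num
    calc ENNReal.ofReal (1 - p) = ENNReal.ofReal 1 - ENNReal.ofReal p :=
          ENNReal.ofReal_sub 1 hp0.le
      _ = 1 - ENNReal.ofReal p := by rw [ENNReal.ofReal_one]
      _ ≤ 1 - ν Sᶜ := tsub_le_tsub_left hSc 1
      _ ≤ ν S := by
          rw [tsub_le_iff_right]
          rw [← measure_univ (μ := ν)]
          exact le_of_eq (measure_add_measure_compl hSmeas).symm
end

section
/- Let N ≥ 1, n ≥ 1, and η > 0. Let Z₁, …, Zₙ be independent identically distributed random variables taking values in Fin N, with pᵢ = P(Z₁ = i) for each i. For each i let N̂ᵢ = #{j ∈ {1,…,n} : Zⱼ = i} be the empirical count. Then P( ∑_{i=1}^{N} | N̂ᵢ/n − pᵢ | ≥ η ) ≤ 2^N · exp(−n·η²/2). -/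
/-!
The ℓ¹ distance between two probability vectors on `Fin N` is twice the largest excess
`∑ i ∈ A, (q i - p i)` over subsets `A`. For a fixed `A`, the number of samples falling in `A`
is a sum of `n` independent Bernoulli variables, so by Hoeffding's inequality it exceeds its mean
by `n η / 2` with probability at most `exp (-n η² / 2)`; a union bound over the `2 ^ N` subsets
finishes the proof.
-/

open MeasureTheory ProbabilityTheory Finset Real

theorem Finset.sum_abs_eq_two_nsmul_sum_filter_nonneg {ι G : Type*} [Fintype ι]
    [AddCommGroup G] [LinearOrder G] [IsOrderedAddMonoid G] {d : ι → G}
    (h : ∑ i, d i = 0) : ∑ i, |d i| = 2 • ∑ i with 0 ≤ d i, d i := by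
  have habs (i : ι) : |d i| = 2 • (if 0 ≤ d i then d i else 0) - d i := by
    split_ifs with hi
    · rw [abs_of_nonneg hi, two_nsmul, add_sub_cancel_right]
    · rw [abs_of_neg (not_le.mp hi), nsmul_zero, zero_sub]
  simp_rw [habs, sum_sub_distrib, h, sub_zero, ← smul_sum, sum_filter]

theorem exists_finset_le_sum_indicator_sub {ι α : Type*} [Fintype ι] [Nonempty ι]
    [Fintype α] [DecidableEq α] {p : α → ℝ} (hp : ∑ i, p i = 1) (ω : ι → α) {η : ℝ}
    (hη : η ≤ ∑ i, |(#{j | ω j = i} : ℝ) / Fintype.card ι - p i|) :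
    ∃ A : Finset α, Fintype.card ι * η / 2 ≤
      ∑ j, ((A : Set α).indicator 1 (ω j) - ∑ i ∈ A, p i) := by
  set n : ℝ := (Fintype.card ι : ℝ)
  have hn : 0 < n := Nat.cast_pos.mpr Fintype.card_pos
  set d : α → ℝ := fun i => (#{j | ω j = i} : ℝ) / n - p i
  have hcount (A : Finset α) : ∑ i ∈ A, (#{j | ω j = i} : ℝ) = #{j | ω j ∈ A} := by
    exact_mod_cast sum_card_fiberwise_eq_card_filter univ A ω
  have hsum (A : Finset α) :
      ∑ j, ((A : Set α).indicator 1 (ω j) - ∑ i ∈ A, p i) = n * ∑ i ∈ A, d i := by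
    simp only [d, sum_sub_distrib, ← sum_div, hcount, mul_sub, mul_div_cancel₀ _ hn.ne']
    simp [Set.indicator_apply, sum_boole, n]
  have hd : ∑ i, d i = 0 := by
    simp only [d, sum_sub_distrib, ← sum_div, hcount, hp, mem_univ, filter_true, card_univ]
    exact sub_eq_zero.mpr (div_self hn.ne')
  refine ⟨({i | 0 ≤ d i} : Finset α), ?_⟩
  have hA := hη.trans_eq (sum_abs_eq_two_nsmul_sum_filter_nonneg hd)
  rw [two_nsmul] at hA
  rw [hsum, mul_div_assoc]
  exact mul_le_mul_of_nonneg_left (by linarith) hn.le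

theorem hasSubgaussianMGF_indicator_sub {α : Type*} [MeasurableSpace α] (μ : Measure α)
    [IsProbabilityMeasure μ] {s : Set α} (hs : MeasurableSet s) :
    HasSubgaussianMGF (fun x => s.indicator 1 x - μ.real s) (1 / 4) μ := by
  have hm : Measurable (s.indicator (1 : α → ℝ)) := measurable_one.indicator hs
  have hIcc : ∀ x, s.indicator (1 : α → ℝ) x ∈ Set.Icc (0 : ℝ) 1 := fun x => by
    by_cases hx : x ∈ s <;> simp [hx]
  convert hasSubgaussianMGF_of_mem_Icc hm.aemeasurable (ae_of_all μ hIcc) using 2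
  · rw [integral_indicator_one hs]
  · norm_num

theorem measureReal_sum_indicator_sub_ge_le {α ι : Type*} [MeasurableSpace α] [Fintype ι]
    (μ : Measure α) [IsProbabilityMeasure μ] {s : Set α} (hs : MeasurableSet s)
    {t : ℝ} (ht : 0 ≤ t) :
    (Measure.pi fun _ : ι => μ).real {ω | t ≤ ∑ j, (s.indicator 1 (ω j) - μ.real s)} ≤
      exp (-2 * t ^ 2 / Fintype.card ι) := by
  have hindep : iIndepFun (fun j (ω : ι → α) => s.indicator 1 (ω j) - μ.real s)
      (Measure.pi fun _ : ι => μ) :=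
    iIndepFun_pi (X := fun _ x => s.indicator 1 x - μ.real s) fun _ =>
      ((measurable_one.indicator hs).sub_const _).aemeasurable
  have hsubG (j : ι) : HasSubgaussianMGF (fun ω : ι → α => s.indicator 1 (ω j) - μ.real s)
      (1 / 4) (Measure.pi fun _ : ι => μ) := by
    refine HasSubgaussianMGF.of_map (X := fun x => s.indicator 1 x - μ.real s)
      (measurable_pi_apply j).aemeasurable ?_
    rw [(measurePreserving_eval (fun _ : ι => μ) j).map_eq]
    exact hasSubgaussianMGF_indicator_sub μ hs
  convert HasSubgaussianMGF.measure_sum_ge_le_of_iIndepFun hindep (s := univ)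
    (fun j _ => hsubG j) ht using 2
  simp only [neg_mul, one_div, sum_const, card_univ, nsmul_eq_mul, NNReal.coe_mul,
    NNReal.coe_natCast, NNReal.coe_inv, NNReal.coe_ofNat]
  ring

theorem bretagnolle_huber_carol_general
    (N n : ℕ) (hn : 1 ≤ n) (η : ℝ) (hη : 0 < η)
    (μ : Measure (Fin N)) [IsProbabilityMeasure μ] :
    (Measure.pi fun _ : Fin n => μ)
        {ω : Fin n → Fin N |
          η ≤ ∑ i : Fin N,
            |((Finset.univ.filter fun j : Fin n => ω j = i).card : ℝ) / (n : ℝ) -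
              (μ {i}).toReal|} ≤
      ENNReal.ofReal ((2 : ℝ) ^ N * Real.exp (-(n * η ^ 2) / 2)) := by
  have : Nonempty (Fin n) := ⟨⟨0, hn⟩⟩
  set E : Finset (Fin N) → Set (Fin n → Fin N) := fun A =>
    {ω | n * η / 2 ≤ ∑ j, ((A : Set (Fin N)).indicator 1 (ω j) - μ.real A)}
  have hE (A : Finset (Fin N)) :
      (Measure.pi fun _ : Fin n => μ) (E A) ≤ ENNReal.ofReal (exp (-(n * η ^ 2) / 2)) := by
    rw [← ENNReal.ofReal_toReal (measure_ne_top _ (E A))]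
    refine ENNReal.ofReal_le_ofReal ((measureReal_sum_indicator_sub_ge_le μ A.measurableSet
      (by positivity)).trans_eq ?_)
    rw [Fintype.card_fin]
    congr 1
    field_simp
  calc _ ≤ (Measure.pi fun _ : Fin n => μ) (⋃ A, E A) := measure_mono fun ω hω => by
        obtain ⟨A, hA⟩ := exists_finset_le_sum_indicator_sub (p := fun i => μ.real {i})
          (by simp) ω (by simpa [measureReal_def] using hω)
        rw [sum_measureReal_singleton, Fintype.card_fin] at hA
        exact Set.mem_iUnion.mpr ⟨A, hA⟩
    _ ≤ ∑ A, (Measure.pi fun _ : Fin n => μ) (E A) := measure_iUnion_fintype_le _ _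
    _ ≤ ∑ A : Finset (Fin N), ENNReal.ofReal (exp (-(n * η ^ 2) / 2)) :=
        sum_le_sum fun A _ => hE A
    _ = _ := by
      rw [sum_const, card_univ, Fintype.card_finset, Fintype.card_fin, nsmul_eq_mul,
        ENNReal.ofReal_mul (by positivity), ENNReal.ofReal_pow zero_le_two]
      norm_num

/-- Bretagnolle–Huber–Carol concentration inequality for the multinomial distribution:
for `n` i.i.d. categorical samples over `N` categories with category probabilities
`pᵢ = μ {i}`, the total variation distance between the empirical frequency vector and
the true probability vector exceeds `η` with probability at most `2^N exp(-n η² / 2)`. -/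
theorem bretagnolle_huber_carol
    (N n : ℕ) (hN : 1 ≤ N) (hn : 1 ≤ n) (η : ℝ) (hη : 0 < η)
    (μ : Measure (Fin N)) [IsProbabilityMeasure μ] :
    (Measure.pi fun _ : Fin n => μ)
        {ω : Fin n → Fin N |
          η ≤ ∑ i : Fin N,
            |((Finset.univ.filter fun j : Fin n => ω j = i).card : ℝ) / (n : ℝ) -
              (μ {i}).toReal|} ≤
      ENNReal.ofReal ((2 : ℝ) ^ N * Real.exp (-(n * η ^ 2) / 2)) :=
  bretagnolle_huber_carol_general N n hn η hη μ
end
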